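/- RTB is sound with respect to B-frames: if a hypersequent H is derivable in RTB, then H has no countermodel on any reflexive symmetric Kripke frame. -/

import Mathlib

/-!
Soundness is proved for a root-free form of countermodel: a hypersequent has a branch if some
chain `w₁ R w₂ R ⋯ R wₙ` has `wᵢ` refuting the `i`-th component. Every rule preserves the
absence of branches. The propositional rules, weakenings and Cut act on one component at one
point; □L uses the `R`-step between the two adjacent components; □R extends a branch by an
`R`-successor falsifying the boxed formula; T and external contraction use reflexivity; Sym
reverses the branch, which stays a chain by symmetry.
-/

inductive Fm where
  | atom : ℕ → Fm
  | neg : Fm → Fm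
  | and : Fm → Fm → Fm
  | or : Fm → Fm → Fm
  | box : Fm → Fm
deriving DecidableEq

/-- Classical Kripke satisfaction. -/
def Sat {W : Type} (R : W → W → Prop) (v : W → ℕ → Prop) : Fm → W → Prop
  | .atom n, x => v x n
  | .neg φ, x => ¬ Sat R v φ x
  | .and φ ψ, x => Sat R v φ x ∧ Sat R v ψ x
  | .or φ ψ, x => Sat R v φ x ∨ Sat R v ψ x
  | .box φ, x => ∀ y, R x y → Sat R v φ y

/-- A sequent is a pair of finite sets of formulas. -/
abbrev HSeq := Finset Fm × Finset Fm
/-- A hypersequent is a finite list of sequents. -/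
abbrev Hyp := List HSeq

/-- Hypersequent derivability, parametrized by which optional rules are present:
`cut` = the Cut rule, `ec` = external contraction, `ew` = insertion of an empty
sequent anywhere, `sym` = reversal of the hypersequent, `t` = the T rule. The
base rules (Id, EWL, EWR, TL, TR, ¬, ∧, ∨, □L, □R) are always present. -/
inductive Der (cut ec ew sym t : Bool) : Hyp → Prop
  | id (n : ℕ) : Der cut ec ew sym t [({Fm.atom n}, {Fm.atom n})]
  | cutR (hc : cut = true) (G H : Hyp) (Γ Δ : Finset Fm) (φ : Fm) :
      Der cut ec ew sym t (G ++ [(Γ, insert φ Δ)] ++ H) →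
      Der cut ec ew sym t (G ++ [(insert φ Γ, Δ)] ++ H) →
      Der cut ec ew sym t (G ++ [(Γ, Δ)] ++ H)
  | ewl (G : Hyp) : Der cut ec ew sym t G → Der cut ec ew sym t ((∅, ∅) :: G)
  | ewr (G : Hyp) : Der cut ec ew sym t G → Der cut ec ew sym t (G ++ [(∅, ∅)])
  | tl (G H : Hyp) (Γ Δ : Finset Fm) (φ : Fm) :
      Der cut ec ew sym t (G ++ [(Γ, Δ)] ++ H) →
      Der cut ec ew sym t (G ++ [(insert φ Γ, Δ)] ++ H)
  | tr (G H : Hyp) (Γ Δ : Finset Fm) (φ : Fm) :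
      Der cut ec ew sym t (G ++ [(Γ, Δ)] ++ H) →
      Der cut ec ew sym t (G ++ [(Γ, insert φ Δ)] ++ H)
  | negL (G H : Hyp) (Γ Δ : Finset Fm) (φ : Fm) :
      Der cut ec ew sym t (G ++ [(Γ, insert φ Δ)] ++ H) →
      Der cut ec ew sym t (G ++ [(insert (.neg φ) Γ, Δ)] ++ H)
  | negR (G H : Hyp) (Γ Δ : Finset Fm) (φ : Fm) :
      Der cut ec ew sym t (G ++ [(insert φ Γ, Δ)] ++ H) →
      Der cut ec ew sym t (G ++ [(Γ, insert (.neg φ) Δ)] ++ H)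
  | andL1 (G H : Hyp) (Γ Δ : Finset Fm) (φ ψ : Fm) :
      Der cut ec ew sym t (G ++ [(insert φ Γ, Δ)] ++ H) →
      Der cut ec ew sym t (G ++ [(insert (.and φ ψ) Γ, Δ)] ++ H)
  | andL2 (G H : Hyp) (Γ Δ : Finset Fm) (φ ψ : Fm) :
      Der cut ec ew sym t (G ++ [(insert ψ Γ, Δ)] ++ H) →
      Der cut ec ew sym t (G ++ [(insert (.and φ ψ) Γ, Δ)] ++ H)
  | andR (G H : Hyp) (Γ Δ : Finset Fm) (φ ψ : Fm) :
      Der cut ec ew sym t (G ++ [(Γ, insert φ Δ)] ++ H) →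
      Der cut ec ew sym t (G ++ [(Γ, insert ψ Δ)] ++ H) →
      Der cut ec ew sym t (G ++ [(Γ, insert (.and φ ψ) Δ)] ++ H)
  | orL (G H : Hyp) (Γ Δ : Finset Fm) (φ ψ : Fm) :
      Der cut ec ew sym t (G ++ [(insert φ Γ, Δ)] ++ H) →
      Der cut ec ew sym t (G ++ [(insert ψ Γ, Δ)] ++ H) →
      Der cut ec ew sym t (G ++ [(insert (.or φ ψ) Γ, Δ)] ++ H)
  | orR1 (G H : Hyp) (Γ Δ : Finset Fm) (φ ψ : Fm) :
      Der cut ec ew sym t (G ++ [(Γ, insert φ Δ)] ++ H) →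
      Der cut ec ew sym t (G ++ [(Γ, insert (.or φ ψ) Δ)] ++ H)
  | orR2 (G H : Hyp) (Γ Δ : Finset Fm) (φ ψ : Fm) :
      Der cut ec ew sym t (G ++ [(Γ, insert ψ Δ)] ++ H) →
      Der cut ec ew sym t (G ++ [(Γ, insert (.or φ ψ) Δ)] ++ H)
  | boxL (G H : Hyp) (Γ Δ Sg Λ : Finset Fm) (φ : Fm) :
      Der cut ec ew sym t (G ++ [(Γ, Δ), (insert φ Sg, Λ)] ++ H) →
      Der cut ec ew sym t (G ++ [(insert (.box φ) Γ, Δ), (Sg, Λ)] ++ H)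
  | boxR (G : Hyp) (Γ Δ : Finset Fm) (φ : Fm) :
      Der cut ec ew sym t (G ++ [(Γ, Δ), (∅, {φ})]) →
      Der cut ec ew sym t (G ++ [(Γ, insert (.box φ) Δ)])
  | ecR (he : ec = true) (G H : Hyp) (Γ Δ : Finset Fm) :
      Der cut ec ew sym t (G ++ [(Γ, Δ), (Γ, Δ)] ++ H) →
      Der cut ec ew sym t (G ++ [(Γ, Δ)] ++ H)
  | ewRule (he : ew = true) (G H : Hyp) :
      Der cut ec ew sym t (G ++ H) →
      Der cut ec ew sym t (G ++ [(∅, ∅)] ++ H)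
  | symRule (hs : sym = true) (G : Hyp) :
      Der cut ec ew sym t G → Der cut ec ew sym t G.reverse
  | tRule (ht : t = true) (G H : Hyp) (Γ Δ : Finset Fm) (φ : Fm) :
      Der cut ec ew sym t (G ++ [(insert φ Γ, Δ)] ++ H) →
      Der cut ec ew sym t (G ++ [(insert (.box φ) Γ, Δ)] ++ H)

/-- RTB: Id, Cut, EWL, EWR, TL, TR, rules for ¬,∧,∨, □L, □R, Sym and the T rule. -/
abbrev RTB : Hyp → Prop := Der true false false true true

/-- A point refutes a sequent: all antecedent formulas true, all succedent formulas false. -/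
def Refutes {W : Type} (R : W → W → Prop) (v : W → ℕ → Prop) (S : HSeq) (w : W) : Prop :=
  (∀ φ ∈ S.1, Sat R v φ w) ∧ (∀ φ ∈ S.2, ¬ Sat R v φ w)

/-- A branch of R-related points starting at `w` countermodels the hypersequent. -/
def Counter {W : Type} (R : W → W → Prop) (v : W → ℕ → Prop) : Hyp → W → Prop
  | [], _ => True
  | [S], w => Refutes R v S w
  | S :: S' :: rest, w => Refutes R v S w ∧ ∃ w', R w w' ∧ Counter R v (S' :: rest) w'

open List

theorem List.forall₂_append_left_iff {α β : Type*} {P : α → β → Prop} {l₁ l₂ : List α}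
    {u : List β} :
    Forall₂ P (l₁ ++ l₂) u ↔ ∃ u₁ u₂, Forall₂ P l₁ u₁ ∧ Forall₂ P l₂ u₂ ∧ u = u₁ ++ u₂ := by
  induction l₁ generalizing u with
  | nil => simp
  | cons a l₁ ih =>
    simp only [cons_append, forall₂_cons_left_iff, ih]
    constructor
    · rintro ⟨b, _, hab, ⟨u₁, u₂, h₁, h₂, rfl⟩, rfl⟩
      exact ⟨b :: u₁, u₂, ⟨b, u₁, hab, h₁, rfl⟩, h₂, rfl⟩
    · rintro ⟨_, u₂, ⟨b, u₁, hab, h₁, rfl⟩, h₂, rfl⟩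
      exact ⟨b, u₁ ++ u₂, hab, ⟨u₁, u₂, h₁, h₂, rfl⟩, rfl⟩

section Soundness

variable {W : Type} {R : W → W → Prop} {v : W → ℕ → Prop}

theorem refutes_insert_left {Γ Δ : Finset Fm} {φ : Fm} {w : W} :
    Refutes R v (insert φ Γ, Δ) w ↔ Sat R v φ w ∧ Refutes R v (Γ, Δ) w := by
  simp [Refutes, and_assoc]

theorem refutes_insert_right {Γ Δ : Finset Fm} {φ : Fm} {w : W} :
    Refutes R v (Γ, insert φ Δ) w ↔ ¬ Sat R v φ w ∧ Refutes R v (Γ, Δ) w := by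
  simp [Refutes, and_left_comm]

variable (R v) in
def HasBranch (H : Hyp) : Prop :=
  ∃ ws : List W, Forall₂ (Refutes R v) H ws ∧ ws.IsChain R

theorem Counter.exists_isChain {T : Hyp} {S : HSeq} {w : W} (h : Counter R v (S :: T) w) :
    ∃ ws, Forall₂ (Refutes R v) (S :: T) (w :: ws) ∧ (w :: ws).IsChain R := by
  induction T generalizing S w with
  | nil => exact ⟨[], .cons h .nil, .singleton w⟩
  | cons S' T ih =>
    obtain ⟨hS, w', hww', h'⟩ := h
    obtain ⟨ws, hws, hchain⟩ := ih h'
    exact ⟨w' :: ws, .cons hS hws, .cons_cons hww' hchain⟩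

theorem Counter.hasBranch {H : Hyp} {w : W} (h : Counter R v H w) : HasBranch R v H := by
  cases H with
  | nil => exact ⟨[], .nil, .nil⟩
  | cons S T =>
    obtain ⟨ws, hws, hchain⟩ := h.exists_isChain
    exact ⟨w :: ws, hws, hchain⟩

theorem hasBranch_middle_iff {G K : Hyp} {S : HSeq} :
    HasBranch R v (G ++ [S] ++ K) ↔ ∃ as x bs, Forall₂ (Refutes R v) G as ∧ Refutes R v S x ∧
      Forall₂ (Refutes R v) K bs ∧ (as ++ x :: bs).IsChain R := by
  simp only [HasBranch, append_assoc, singleton_append, forall₂_append_left_iff,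
    forall₂_cons_left_iff]
  constructor
  · rintro ⟨_, ⟨as, _, hG, ⟨x, bs, hS, hK, rfl⟩, rfl⟩, hchain⟩
    exact ⟨as, x, bs, hG, hS, hK, hchain⟩
  · rintro ⟨as, x, bs, hG, hS, hK, hchain⟩
    exact ⟨_, ⟨as, _, hG, ⟨x, bs, hS, hK, rfl⟩, rfl⟩, hchain⟩

theorem HasBranch.middle_or {G K : Hyp} {S S₁ S₂ : HSeq} (h : HasBranch R v (G ++ [S] ++ K))
    (hS : ∀ x, Refutes R v S x → Refutes R v S₁ x ∨ Refutes R v S₂ x) :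
    HasBranch R v (G ++ [S₁] ++ K) ∨ HasBranch R v (G ++ [S₂] ++ K) := by
  obtain ⟨as, x, bs, hG, hx, hK, hchain⟩ := hasBranch_middle_iff.mp h
  exact (hS x hx).imp (fun hx₁ => hasBranch_middle_iff.mpr ⟨as, x, bs, hG, hx₁, hK, hchain⟩)
    (fun hx₂ => hasBranch_middle_iff.mpr ⟨as, x, bs, hG, hx₂, hK, hchain⟩)

theorem HasBranch.middle_mono {G K : Hyp} {S S' : HSeq} (h : HasBranch R v (G ++ [S] ++ K))
    (hS : ∀ x, Refutes R v S x → Refutes R v S' x) : HasBranch R v (G ++ [S'] ++ K) :=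
  (h.middle_or fun x hx => .inl (hS x hx)).elim id id

theorem HasBranch.middle_pair_mono {G K : Hyp} {S T S' T' : HSeq}
    (h : HasBranch R v (G ++ [S, T] ++ K))
    (hST : ∀ x y, R x y → Refutes R v S x → Refutes R v T y →
      Refutes R v S' x ∧ Refutes R v T' y) :
    HasBranch R v (G ++ [S', T'] ++ K) := by
  have hsplit (A B : HSeq) : G ++ [A, B] ++ K = G ++ [A] ++ (B :: K) := by simp
  rw [hsplit] at h ⊢
  obtain ⟨as, x, _, hG, hx, hK, hchain⟩ := hasBranch_middle_iff.mp h
  obtain ⟨y, bs, hy, hK', rfl⟩ := forall₂_cons_left_iff.mp hK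
  have hxy : R x y := (isChain_append_cons_cons.mp hchain).2.1
  obtain ⟨hx', hy'⟩ := hST x y hxy hx hy
  exact hasBranch_middle_iff.mpr ⟨as, x, y :: bs, hG, hx', .cons hy' hK', hchain⟩

theorem HasBranch.duplicate {G K : Hyp} {S : HSeq} (hR : ∀ x, R x x)
    (h : HasBranch R v (G ++ [S] ++ K)) : HasBranch R v (G ++ [S, S] ++ K) := by
  obtain ⟨as, x, bs, hG, hx, hK, hchain⟩ := hasBranch_middle_iff.mp h
  refine ⟨as ++ x :: x :: bs, ?_, ?_⟩
  · simpa using rel_append hG (Forall₂.cons hx (.cons hx hK))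
  · rw [isChain_split] at hchain
    exact isChain_append_cons_cons.mpr ⟨hchain.1, hR x, hchain.2⟩

theorem HasBranch.snoc {G : Hyp} {S S' T : HSeq} (h : HasBranch R v (G ++ [S]))
    (hS : ∀ x, Refutes R v S x → Refutes R v S' x ∧ ∃ y, R x y ∧ Refutes R v T y) :
    HasBranch R v (G ++ [S', T]) := by
  obtain ⟨_, ⟨as, _, hG, ⟨x, _, hx, hnil, rfl⟩, rfl⟩, hchain⟩ := by
    simpa only [HasBranch, forall₂_append_left_iff, forall₂_cons_left_iff] using h
  obtain rfl := forall₂_nil_left_iff.mp hnil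
  obtain ⟨hx', y, hxy, hy⟩ := hS x hx
  refine ⟨as ++ [x, y], rel_append hG (.cons hx' (.cons hy .nil)), ?_⟩
  exact isChain_append_cons_cons.mpr ⟨hchain, hxy, .singleton y⟩

theorem HasBranch.of_append_left {G K : Hyp} (h : HasBranch R v (G ++ K)) : HasBranch R v G := by
  obtain ⟨_, ⟨as, _, hG, _, rfl⟩, hchain⟩ := by
    simpa only [HasBranch, forall₂_append_left_iff] using h
  exact ⟨as, hG, hchain.left_of_append⟩

theorem HasBranch.of_append_right {G K : Hyp} (h : HasBranch R v (G ++ K)) :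
    HasBranch R v K := by
  obtain ⟨_, ⟨_, bs, _, hK, rfl⟩, hchain⟩ := by
    simpa only [HasBranch, forall₂_append_left_iff] using h
  exact ⟨bs, hK, hchain.right_of_append⟩

theorem HasBranch.reverse {H : Hyp} (hsymm : ∀ x y, R x y → R y x) (h : HasBranch R v H) :
    HasBranch R v H.reverse := by
  obtain ⟨ws, hws, hchain⟩ := h
  exact ⟨ws.reverse, forall₂_reverse_iff.mpr hws,
    isChain_reverse.mpr (hchain.imp fun x y => hsymm x y)⟩

theorem not_hasBranch_id (n : ℕ) : ¬ HasBranch R v [({Fm.atom n}, {Fm.atom n})] := by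
  rintro ⟨_, h, _⟩
  obtain ⟨x, _, ⟨hl, hr⟩, _⟩ := forall₂_cons_left_iff.mp h
  exact hr _ (Finset.mem_singleton_self _) (hl _ (Finset.mem_singleton_self _))

theorem Der.not_hasBranch {cut ec sym t : Bool} {H : Hyp} (hR : ∀ x, R x x)
    (hsymm : ∀ x y, R x y → R y x) (h : Der cut ec false sym t H) : ¬ HasBranch R v H := by
  induction h with
  | id n => exact not_hasBranch_id n
  | cutR _ _ _ _ _ _ _ _ ih₁ ih₂ =>
    refine fun hb => (hb.middle_or fun x hx => ?_).elim ih₁ ih₂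
    simp only [refutes_insert_left, refutes_insert_right]
    tauto
  | ewl _ _ ih => exact fun hb => ih (HasBranch.of_append_right (G := [(∅, ∅)]) hb)
  | ewr _ _ ih => exact fun hb => ih hb.of_append_left
  | tl _ _ _ _ _ _ ih =>
    exact fun hb => ih (hb.middle_mono fun x hx => (refutes_insert_left.mp hx).2)
  | tr _ _ _ _ _ _ ih =>
    exact fun hb => ih (hb.middle_mono fun x hx => (refutes_insert_right.mp hx).2)
  | negL _ _ _ _ _ _ ih | negR _ _ _ _ _ _ ih | andL1 _ _ _ _ _ _ _ ih | andL2 _ _ _ _ _ _ _ ih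
  | orR1 _ _ _ _ _ _ _ ih | orR2 _ _ _ _ _ _ _ ih =>
    refine fun hb => ih (hb.middle_mono fun x hx => ?_)
    simp only [refutes_insert_left, refutes_insert_right, Sat] at hx ⊢
    tauto
  | andR _ _ _ _ _ _ _ _ ih₁ ih₂ | orL _ _ _ _ _ _ _ _ ih₁ ih₂ =>
    refine fun hb => (hb.middle_or fun x hx => ?_).elim ih₁ ih₂
    simp only [refutes_insert_left, refutes_insert_right, Sat] at hx ⊢
    tauto
  | boxL _ _ _ _ _ _ _ _ ih =>
    refine fun hb => ih (hb.middle_pair_mono fun x y hxy hx hy => ?_)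
    rw [refutes_insert_left] at hx ⊢
    exact ⟨hx.2, hx.1 y hxy, hy⟩
  | boxR _ _ _ _ _ ih =>
    refine fun hb => ih (hb.snoc fun x hx => ?_)
    rw [refutes_insert_right] at hx
    obtain ⟨y, hxy, hy⟩ : ∃ y, R x y ∧ ¬ Sat R v _ y := by simpa [Sat] using hx.1
    exact ⟨hx.2, y, hxy, by simp [Refutes, hy]⟩
  | ecR _ _ _ _ _ _ ih => exact fun hb => ih (hb.duplicate hR)
  | ewRule he => cases he
  | symRule _ _ _ ih => exact fun hb => ih (by simpa using hb.reverse hsymm)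
  | tRule _ _ _ _ _ _ _ ih =>
    refine fun hb => ih (hb.middle_mono fun x hx => ?_)
    rw [refutes_insert_left] at hx ⊢
    exact ⟨hx.1 x (hR x), hx.2⟩

end Soundness

/-- RTB is sound with respect to B-frames: a derivable
hypersequent has no countermodel on any reflexive symmetric Kripke frame. -/
theorem RTB_sound_B :
    ∀ H : Hyp, RTB H →
      ∀ (W : Type) (R : W → W → Prop) (v : W → ℕ → Prop),
        (∀ x, R x x) → (∀ x y, R x y → R y x) →
        ∀ w : W, ¬ Counter R v H w := by
  intro H hH W R v hR hsymm w hC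
  exact Der.not_hasBranch hR hsymm hH hC.hasBranch
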